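/- Let R be a finite monadic convergent SRS over a finite alphabet Σ and let α, β be irreducible strings. Then there exist distinct irreducible strings X and Y with α·X ↓_R α·Y and β·X ↓_R β·Y if and only if there exist irreducible strings X', Y', V and strings γ1, γ2 such that: (1) X' ≠ Y'; (2) γ1 ∈ MP(α); (3) γ2 ∈ MP(β); (4) X'·V and Y'·V are irreducible; and (5) either (a) α·X'·V →!_R γ1, α·Y'·V →!_R γ1, β·X' →!_R γ2 and β·Y' →!_R γ2, or (b) α·X' →!_R γ1, α·Y' →!_R γ1, β·X'·V →!_R γ2 and β·Y'·V →!_R γ2. -/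

import Mathlib

/- Strings over an alphabet `σ` are modelled as `List σ`; a finite string
rewriting system is a finite list of rules `(l, r)`. -/

namespace SRS

variable {σ : Type*}

/-- One-step rewrite relation: `u →_R v`. -/
def Step (R : List (List σ × List σ)) (u v : List σ) : Prop :=
  ∃ x y l r, (l, r) ∈ R ∧ u = x ++ l ++ y ∧ v = x ++ r ++ y

/-- `u →*_R v`: reflexive-transitive closure. -/
def Reduces (R : List (List σ × List σ)) : List σ → List σ → Prop :=
  Relation.ReflTransGen (Step R)

/-- `u ↔*_R v`: reflexive-symmetric-transitive closure. -/
def Equiv (R : List (List σ × List σ)) : List σ → List σ → Prop :=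
  Relation.EqvGen (Step R)

/-- `u ↓_R v`: joinability, i.e. a common reduct exists. -/
def Joins (R : List (List σ × List σ)) : List σ → List σ → Prop :=
  Relation.Join (Reduces R)

/-- A string is irreducible if no rule applies to it. -/
def Irreducible (R : List (List σ × List σ)) (u : List σ) : Prop :=
  ∀ v, ¬ Step R u v

/-- `u →!_R v`: `v` is an `R`-normal form of `u`. -/
def NormalizesTo (R : List (List σ × List σ)) (u v : List σ) : Prop :=
  Reduces R u v ∧ Irreducible R v

/-- Terminating: no infinite chain of rewrite steps. -/
def Terminating (R : List (List σ × List σ)) : Prop :=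
  ¬ ∃ f : ℕ → List σ, ∀ n, Step R (f n) (f (n + 1))

def Confluent (R : List (List σ × List σ)) : Prop :=
  ∀ t s₁ s₂, Reduces R t s₁ → Reduces R t s₂ →
    ∃ t', Reduces R s₁ t' ∧ Reduces R s₂ t'

def Convergent (R : List (List σ × List σ)) : Prop :=
  Terminating R ∧ Confluent R

/-- Dwindling: every right-hand side is a proper prefix of its left-hand side. -/
def Dwindling (R : List (List σ × List σ)) : Prop :=
  ∀ p ∈ R, p.2 <+: p.1 ∧ p.2 ≠ p.1

/-- Monadic: length-reducing with right-hand sides of length at most 1. -/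
def Monadic (R : List (List σ × List σ)) : Prop :=
  ∀ p ∈ R, p.2.length < p.1.length ∧ p.2.length ≤ 1

/-- `MP α`: normal forms of `p ++ s` with `p` a prefix of `α` and `s` a single
symbol or the empty string. -/
def MP (R : List (List σ × List σ)) (α : List σ) : Set (List σ) :=
  { γ | ∃ p s, p <+: α ∧ s.length ≤ 1 ∧ NormalizesTo R (p ++ s) γ }

end SRS

/-
Let `R` be monadic and confluent, and `α`, `X` irreducible. Reducing `αX` one letter of `X` at a
time, the current normal form is either the previous one with the letter appended, or collapses
to a prefix of `α` followed by at most one letter, and monadic rules keep it of that shape. Hence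
the normal form of `αX` is `γ ++ X₂`, where `X = X₁ ++ X₂` and `γ ∈ MP(α)` is the normal form
of `αX₁`.

Given distinct irreducible `X`, `Y` with `αX ↓ αY` and `βX ↓ βY`, decompose the common normal
forms this way. If for `X` or for `Y` the stripped suffix is empty, one of the common normal forms
lies in `MP(α)` or `MP(β)`, and comparing the two decompositions on the other side gives the
witness. Otherwise `X` and `Y` end in a common nonempty suffix whose removal leaves a shorter
pair with the same property. Conversely, a witness yields the pair `X'V`, `Y'V`, since
joinability is preserved by appending `V`.
-/

namespace SRS

variable {σ : Type*} {R : List (List σ × List σ)} {u v w c α β X Y A B : List σ} {a : σ}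

theorem Step.append_right (h : Step R u v) (w : List σ) : Step R (u ++ w) (v ++ w) := by
  obtain ⟨x, y, l, r, hR, rfl, rfl⟩ := h
  exact ⟨x, y ++ w, l, r, hR, by simp, by simp⟩

theorem Step.length_lt (hR : ∀ p ∈ R, p.2.length < p.1.length) (h : Step R u v) :
    v.length < u.length := by
  obtain ⟨x, y, l, r, hlr, rfl, rfl⟩ := h
  have := hR (l, r) hlr
  simp only [List.length_append] at this ⊢
  omega

theorem Reduces.append_right (h : Reduces R u v) (w : List σ) : Reduces R (u ++ w) (v ++ w) :=
  Relation.ReflTransGen.lift (· ++ w) (fun _ _ h => h.append_right w) _ _ h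

theorem Joins.append_right (h : Joins R u v) (w : List σ) : Joins R (u ++ w) (v ++ w) :=
  let ⟨c, hu, hv⟩ := h
  ⟨c ++ w, hu.append_right w, hv.append_right w⟩

theorem Irreducible.of_infix (hu : Irreducible R u) (h : v <:+: u) : Irreducible R v := by
  rintro _ ⟨x, y, l, r, hR, rfl, -⟩
  obtain ⟨s, t, rfl⟩ := h
  exact hu _ ⟨s ++ x, y ++ t, l, r, hR, by simp, rfl⟩

theorem Irreducible.eq_of_reduces (hu : Irreducible R u) (h : Reduces R u v) : v = u := by
  induction h with
  | refl => rfl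
  | tail _ hstep ih => exact absurd (ih ▸ hstep) (hu _)

theorem Irreducible.exists_suffix_redex (hu : Irreducible R u)
    (h : Step R (u ++ [a]) c) : ∃ x l r, (l, r) ∈ R ∧ u ++ [a] = x ++ l ∧ c = x ++ r := by
  obtain ⟨x, y, l, r, hR, hua, rfl⟩ := h
  rcases List.eq_nil_or_concat y with rfl | ⟨y, b, rfl⟩
  · exact ⟨x, l, r, hR, by simpa using hua, by simp⟩
  · have hu' : u = x ++ l ++ y :=
      (List.append_inj' (hua.trans (by simp : _ = x ++ l ++ y ++ [b])) rfl).1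
    exact absurd ⟨x, y, l, r, hR, hu', rfl⟩ (hu _)

theorem NormalizesTo.of_reduces (hconf : Confluent R) (hr : Reduces R u v)
    (h : NormalizesTo R u w) : NormalizesTo R v w := by
  obtain ⟨t, hvt, hwt⟩ := hconf u v w hr h.1
  exact ⟨h.2.eq_of_reduces hwt ▸ hvt, h.2⟩

theorem NormalizesTo.of_joins (hconf : Confluent R) (hj : Joins R u v)
    (h : NormalizesTo R u w) : NormalizesTo R v w :=
  let ⟨_, hu, hv⟩ := hj
  ⟨hv.trans (h.of_reduces hconf hu).1, h.2⟩

theorem NormalizesTo.joins (hu : NormalizesTo R u w) (hv : NormalizesTo R v w) : Joins R u v :=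
  ⟨w, hu.1, hv.1⟩

theorem NormalizesTo.append_right (h : NormalizesTo R u v) (hw : Irreducible R (v ++ w)) :
    NormalizesTo R (u ++ w) (v ++ w) :=
  ⟨h.1.append_right w, hw⟩

theorem exists_normalizesTo_of_length_lt (hR : ∀ p ∈ R, p.2.length < p.1.length)
    (u : List σ) : ∃ v, NormalizesTo R u v := by
  induction h : u.length using Nat.strong_induction_on generalizing u with
  | _ n ih =>
    by_cases hu : Irreducible R u
    · exact ⟨u, .refl, hu⟩
    · obtain ⟨v, huv⟩ := not_forall_not.mp hu
      obtain ⟨w, hvw⟩ := ih _ (h ▸ huv.length_lt hR) v rfl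
      exact ⟨w, .head huv hvw.1, hvw.2⟩

theorem Monadic.eq_or_prefix_of_reduces (hmon : Monadic R) {p s : List σ}
    (hs : s.length ≤ 1) (hu : Irreducible R (p ++ s ++ w)) (hw : Irreducible R (w ++ [a]))
    (hc : Reduces R (p ++ s ++ w ++ [a]) c) :
    c = p ++ s ++ w ++ [a] ∨ ∃ q t, q <+: p ∧ t.length ≤ 1 ∧ c = q ++ t := by
  induction hc with
  | refl => exact .inl rfl
  | tail _ hstep ih =>
    right
    rcases ih with rfl | ⟨q, t, hq, ht, rfl⟩
    · obtain ⟨x, l, r, hlr, heq, rfl⟩ := hu.exists_suffix_redex hstep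
      -- the redex is not inside the irreducible `w ++ [a]`, so it reaches into `p`
      have hl : w.length + 1 < l.length := by
        by_contra! hle
        obtain ⟨x', hx'⟩ : l <:+ w ++ [a] :=
          List.suffix_of_suffix_length_le ⟨x, heq.symm⟩ ⟨p ++ s, by simp⟩
            (by simpa using hle)
        exact hw _ ⟨x', [], l, r, hlr, by simp [hx'], rfl⟩
      have hlen := congrArg List.length heq
      simp only [List.length_append, List.length_singleton] at hlen
      refine ⟨x, r, List.prefix_of_prefix_length_le ⟨l, heq.symm⟩ ⟨s ++ w ++ [a], by simp⟩
        (by omega), (hmon _ hlr).2, rfl⟩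
    · have hqirr : Irreducible R q :=
        hu.of_infix (hq.trans (by simp [List.append_assoc])).isInfix
      obtain ⟨⟩ | ⟨b, ⟨⟩ | ⟨_, _⟩⟩ := t
      · exact absurd (by simpa using hstep) (hqirr _)
      · obtain ⟨x, l, r, hlr, heq, rfl⟩ := hqirr.exists_suffix_redex hstep
        have hlen := congrArg List.length heq
        simp only [List.length_append, List.length_singleton] at hlen
        have hl : r.length < l.length := (hmon _ hlr).1
        exact ⟨x, r, (List.prefix_of_prefix_length_le ⟨l, heq.symm⟩ ⟨[b], rfl⟩
          (by omega)).trans hq, (hmon _ hlr).2, rfl⟩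
      · simp at ht

theorem Monadic.exists_prefix_of_normalizesTo_append (hmon : Monadic R) (hconf : Confluent R)
    (hα : Irreducible R α) (hX : Irreducible R X)
    (hc : NormalizesTo R (α ++ X) c) :
    ∃ p s X₁ X₂, p <+: α ∧ s.length ≤ 1 ∧ X = X₁ ++ X₂ ∧ c = p ++ s ++ X₂ ∧
      NormalizesTo R (α ++ X₁) (p ++ s) := by
  induction X using List.reverseRecOn generalizing c with
  | nil =>
    obtain rfl : c = α := by simpa using hα.eq_of_reduces (by simpa using hc.1)
    exact ⟨c, [], [], [], List.prefix_refl c, by simp, by simp, by simp, by simpa using hc⟩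
  | append_singleton X₀ a ih =>
    obtain ⟨u, hu⟩ := exists_normalizesTo_of_length_lt (fun p hp => (hmon p hp).1) (α ++ X₀)
    obtain ⟨p, s, X₁, X₂, hp, hs, rfl, rfl, hps⟩ :=
      ih (hX.of_infix (List.prefix_append X₀ [a]).isInfix) hu
    have hred : Reduces R (p ++ s ++ X₂ ++ [a]) c :=
      (hc.of_reduces hconf (by simpa using hu.1.append_right [a])).1
    rcases hmon.eq_or_prefix_of_reduces hs hu.2 (hX.of_infix ⟨X₁, [], by simp⟩) hred with
      rfl | ⟨q, t, hq, ht, rfl⟩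
    · exact ⟨p, s, X₁, X₂ ++ [a], hp, hs, by simp, by simp, hps⟩
    · exact ⟨q, t, X₁ ++ X₂ ++ [a], [], hq.trans hp, ht, by simp, by simp,
        by simpa using hc⟩

theorem Monadic.exists_mem_MP_of_normalizesTo_append (hmon : Monadic R) (hconf : Confluent R)
    (hα : Irreducible R α) (hX : Irreducible R X)
    (hc : NormalizesTo R (α ++ X) c) :
    ∃ γ X₁ X₂, γ ∈ MP R α ∧ X = X₁ ++ X₂ ∧ c = γ ++ X₂ ∧ NormalizesTo R (α ++ X₁) γ := by
  obtain ⟨p, s, X₁, X₂, hp, hs, hX, hc, hps⟩ :=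
    hmon.exists_prefix_of_normalizesTo_append hconf hα hX hc
  exact ⟨p ++ s, X₁, X₂, ⟨p, s, hp, hs, .refl, hps.2⟩, hX, hc, hps⟩

theorem Monadic.exists_common_suffix_of_normalizesTo (hmon : Monadic R) (hconf : Confluent R)
    (hβ : Irreducible R β) (hX : Irreducible R X) (hY : Irreducible R Y)
    (hXB : NormalizesTo R (β ++ X) B) (hYB : NormalizesTo R (β ++ Y) B) :
    ∃ X' Y' V γ, γ ∈ MP R β ∧ X = X' ++ V ∧ Y = Y' ++ V ∧
      NormalizesTo R (β ++ X') γ ∧ NormalizesTo R (β ++ Y') γ := by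
  obtain ⟨γ, X₀, S, hγ, rfl, rfl, hXγ⟩ :=
    hmon.exists_mem_MP_of_normalizesTo_append hconf hβ hX hXB
  obtain ⟨δ, Y₀, T, hδ, rfl, hB, hYδ⟩ :=
    hmon.exists_mem_MP_of_normalizesTo_append hconf hβ hY hYB
  rcases List.append_eq_append_iff.1 hB with ⟨W, rfl, rfl⟩ | ⟨W, rfl, rfl⟩
  · exact ⟨X₀ ++ W, Y₀, T, γ ++ W, hδ, by simp, rfl,
      by simpa using hXγ.append_right hYδ.2, hYδ⟩
  · exact ⟨X₀, Y₀ ++ W, S, δ ++ W, hγ, rfl, by simp, hXγ,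
      by simpa using hYδ.append_right hXγ.2⟩

theorem Monadic.exists_split_of_normalizesTo (hmon : Monadic R) (hconf : Confluent R)
    (hα : Irreducible R α) (hβ : Irreducible R β) (hX : Irreducible R X)
    (hXA : NormalizesTo R (α ++ X) A) (hXB : NormalizesTo R (β ++ X) B) :
    ∃ X' M C E, X = X' ++ M ∧ A = C ++ M ∧ B = E ++ M ∧
      NormalizesTo R (α ++ X') C ∧ NormalizesTo R (β ++ X') E ∧
      (C ∈ MP R α ∨ E ∈ MP R β) := by
  obtain ⟨γ, X₁, S₁, hγ, rfl, rfl, hXγ⟩ :=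
    hmon.exists_mem_MP_of_normalizesTo_append hconf hα hX hXA
  obtain ⟨δ, X₂, S₂, hδ, hX, rfl, hXδ⟩ :=
    hmon.exists_mem_MP_of_normalizesTo_append hconf hβ hX hXB
  rcases List.append_eq_append_iff.1 hX with ⟨W, rfl, rfl⟩ | ⟨W, rfl, rfl⟩
  · refine ⟨X₁ ++ W, S₂, γ ++ W, δ, by simp, by simp, rfl, ?_, hXδ, .inr hδ⟩
    simpa using hXγ.append_right (hXA.2.of_infix ⟨[], S₂, by simp⟩)
  · refine ⟨X₂ ++ W, S₁, γ, δ ++ W, by simp, rfl, by simp, hXγ, ?_, .inl hγ⟩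
    simpa using hXδ.append_right (hXB.2.of_infix ⟨[], S₁, by simp⟩)

variable (R α β) in
def MPCriterion : Prop :=
  ∃ X' Y' V γ₁ γ₂ : List σ,
    X' ≠ Y' ∧
    γ₁ ∈ MP R α ∧
    γ₂ ∈ MP R β ∧
    Irreducible R X' ∧ Irreducible R Y' ∧ Irreducible R V ∧
    Irreducible R (X' ++ V) ∧ Irreducible R (Y' ++ V) ∧
    ((NormalizesTo R (α ++ X' ++ V) γ₁ ∧
      NormalizesTo R (α ++ Y' ++ V) γ₁ ∧
      NormalizesTo R (β ++ X') γ₂ ∧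
      NormalizesTo R (β ++ Y') γ₂) ∨
     (NormalizesTo R (α ++ X') γ₁ ∧
      NormalizesTo R (α ++ Y') γ₁ ∧
      NormalizesTo R (β ++ X' ++ V) γ₂ ∧
      NormalizesTo R (β ++ Y' ++ V) γ₂))

theorem MPCriterion.symm (h : MPCriterion R α β) : MPCriterion R β α := by
  obtain ⟨X', Y', V, γ₁, γ₂, hne, hγ₁, hγ₂, hX', hY', hV, hXV, hYV, h⟩ := h
  refine ⟨X', Y', V, γ₂, γ₁, hne, hγ₂, hγ₁, hX', hY', hV, hXV, hYV, ?_⟩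
  rcases h with ⟨h₁, h₂, h₃, h₄⟩ | ⟨h₁, h₂, h₃, h₄⟩
  exacts [.inr ⟨h₃, h₄, h₁, h₂⟩, .inl ⟨h₃, h₄, h₁, h₂⟩]

theorem MPCriterion.of_mem_MP_left (hmon : Monadic R) (hconf : Confluent R)
    (hβ : Irreducible R β) (hne : X ≠ Y) (hX : Irreducible R X) (hY : Irreducible R Y)
    (hXA : NormalizesTo R (α ++ X) A) (hYA : NormalizesTo R (α ++ Y) A) (hA : A ∈ MP R α)
    (hXB : NormalizesTo R (β ++ X) B) (hYB : NormalizesTo R (β ++ Y) B) :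
    MPCriterion R α β := by
  obtain ⟨X', Y', V, γ, hγ, rfl, rfl, hXγ, hYγ⟩ :=
    hmon.exists_common_suffix_of_normalizesTo hconf hβ hX hY hXB hYB
  refine ⟨X', Y', V, A, γ, fun h => hne (h ▸ rfl), hA, hγ, hX.of_infix ⟨[], V, by simp⟩,
    hY.of_infix ⟨[], V, by simp⟩, hX.of_infix ⟨X', [], by simp⟩, hX, hY,
    .inl ⟨?_, ?_, hXγ, hYγ⟩⟩
  · simpa using hXA
  · simpa using hYA

theorem MPCriterion.of_mem_MP (hmon : Monadic R) (hconf : Confluent R)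
    (hα : Irreducible R α) (hβ : Irreducible R β) (hne : X ≠ Y)
    (hX : Irreducible R X) (hY : Irreducible R Y)
    (hXA : NormalizesTo R (α ++ X) A) (hYA : NormalizesTo R (α ++ Y) A)
    (hXB : NormalizesTo R (β ++ X) B) (hYB : NormalizesTo R (β ++ Y) B)
    (h : A ∈ MP R α ∨ B ∈ MP R β) : MPCriterion R α β := by
  rcases h with hA | hB
  · exact .of_mem_MP_left hmon hconf hβ hne hX hY hXA hYA hA hXB hYB
  · exact (MPCriterion.of_mem_MP_left hmon hconf hα hne hX hY hXB hYB hB hXA hYA).symm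

variable (R α β) in
def JoinablePair (X Y : List σ) : Prop :=
  X ≠ Y ∧ Irreducible R X ∧ Irreducible R Y ∧ Joins R (α ++ X) (α ++ Y) ∧
    Joins R (β ++ X) (β ++ Y)

theorem JoinablePair.of_append_right {X' Y' M Z D F : List σ}
    (h : JoinablePair R α β (X' ++ M) (Y' ++ (Z ++ M)))
    (hXα : Reduces R (α ++ X') (D ++ Z)) (hYα : Reduces R (α ++ Y') D)
    (hXβ : Reduces R (β ++ X') (F ++ Z)) (hYβ : Reduces R (β ++ Y') F) :
    JoinablePair R α β X' (Y' ++ Z) := by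
  obtain ⟨hne, hX, hY, -, -⟩ := h
  refine ⟨fun h => hne (by simp [h]), hX.of_infix ⟨[], M, by simp⟩,
    hY.of_infix ⟨[], M, by simp⟩, ⟨D ++ Z, hXα, ?_⟩, ⟨F ++ Z, hXβ, ?_⟩⟩
  · simpa using hYα.append_right Z
  · simpa using hYβ.append_right Z

theorem JoinablePair.symm (h : JoinablePair R α β X Y) : JoinablePair R α β Y X :=
  let ⟨hne, hX, hY, ⟨a, hXa, hYa⟩, ⟨b, hXb, hYb⟩⟩ := h
  ⟨hne.symm, hY, hX, ⟨a, hYa, hXa⟩, ⟨b, hYb, hXb⟩⟩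

theorem JoinablePair.mpCriterion (hmon : Monadic R) (hconf : Confluent R)
    (hα : Irreducible R α) (hβ : Irreducible R β) (h : JoinablePair R α β X Y) :
    MPCriterion R α β := by
  induction hn : X.length + Y.length using Nat.strong_induction_on generalizing X Y with
  | _ n ih =>
  have ⟨hne, hX, hY, hjα, hjβ⟩ := h
  have hnf := exists_normalizesTo_of_length_lt (fun p hp => (hmon p hp).1)
  obtain ⟨A, hXA⟩ := hnf (α ++ X)
  obtain ⟨B, hXB⟩ := hnf (β ++ X)
  have hYA := hXA.of_joins hconf hjα
  have hYB := hXB.of_joins hconf hjβ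
  obtain ⟨X', M, C, E, rfl, rfl, rfl, hXC, hXE, hCE⟩ :=
    hmon.exists_split_of_normalizesTo hconf hα hβ hX hXA hXB
  obtain ⟨Y', N, D, F, rfl, hA, hB, hYD, hYF, hDF⟩ :=
    hmon.exists_split_of_normalizesTo hconf hα hβ hY hYA hYB
  have hcrit := MPCriterion.of_mem_MP hmon hconf hα hβ hne hX hY hXA hYA hXB hYB
  by_cases hM : M = []
  · exact hcrit (by simpa [hM] using hCE)
  by_cases hN : N = []
  · exact hcrit (by rw [hA, hB]; simpa [hN] using hDF)
  have hMpos := List.length_pos_iff.2 hM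
  have hNpos := List.length_pos_iff.2 hN
  -- `X` and `Y` end in the common nonempty suffix `M` or `N`, which can be stripped off
  rcases List.append_eq_append_iff.1 hA with ⟨Z, rfl, rfl⟩ | ⟨Z, rfl, rfl⟩
  · obtain rfl : F = E ++ Z := List.append_cancel_right (by simpa using hB.symm)
    refine ih _ ?_ (h.symm.of_append_right hYD.1 hXC.1 hYF.1 hXE.1) rfl
    simp only [List.length_append] at hn ⊢
    omega
  · obtain rfl : E = F ++ Z := List.append_cancel_right (by simpa using hB)
    refine ih _ ?_ (h.of_append_right hXC.1 hYD.1 hXE.1 hYF.1) rfl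
    simp only [List.length_append] at hn ⊢
    omega

theorem MPCriterion.exists_joinablePair (h : MPCriterion R α β) :
    ∃ X Y, JoinablePair R α β X Y := by
  obtain ⟨X', Y', V, γ₁, γ₂, hne, -, -, -, -, -, hXV, hYV, h⟩ := h
  rcases h with ⟨h₁, h₂, h₃, h₄⟩ | ⟨h₁, h₂, h₃, h₄⟩
  · refine ⟨X' ++ V, Y' ++ V, mt List.append_cancel_right hne, hXV, hYV, ?_, ?_⟩
    · simpa using h₁.joins h₂
    · simpa using (h₃.joins h₄).append_right V
  · refine ⟨X' ++ V, Y' ++ V, mt List.append_cancel_right hne, hXV, hYV, ?_, ?_⟩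
    · simpa using (h₁.joins h₂).append_right V
    · simpa using h₃.joins h₄

end SRS

theorem monadic_one_mapping_CE_characterization_general {σ : Type*}
    (R : List (List σ × List σ)) (hmon : SRS.Monadic R) (hconv : SRS.Convergent R)
    (α β : List σ) (hα : SRS.Irreducible R α) (hβ : SRS.Irreducible R β) :
    (∃ X Y : List σ, X ≠ Y ∧ SRS.Irreducible R X ∧ SRS.Irreducible R Y ∧
        SRS.Joins R (α ++ X) (α ++ Y) ∧ SRS.Joins R (β ++ X) (β ++ Y)) ↔
      ∃ X' Y' V γ₁ γ₂ : List σ,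
        X' ≠ Y' ∧
        γ₁ ∈ SRS.MP R α ∧
        γ₂ ∈ SRS.MP R β ∧
        SRS.Irreducible R X' ∧ SRS.Irreducible R Y' ∧ SRS.Irreducible R V ∧
        SRS.Irreducible R (X' ++ V) ∧ SRS.Irreducible R (Y' ++ V) ∧
        ((SRS.NormalizesTo R (α ++ X' ++ V) γ₁ ∧
          SRS.NormalizesTo R (α ++ Y' ++ V) γ₁ ∧
          SRS.NormalizesTo R (β ++ X') γ₂ ∧
          SRS.NormalizesTo R (β ++ Y') γ₂) ∨
         (SRS.NormalizesTo R (α ++ X') γ₁ ∧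
          SRS.NormalizesTo R (α ++ Y') γ₁ ∧
          SRS.NormalizesTo R (β ++ X' ++ V) γ₂ ∧
          SRS.NormalizesTo R (β ++ Y' ++ V) γ₂)) :=
  ⟨fun ⟨_, _, h⟩ => SRS.JoinablePair.mpCriterion hmon hconv.2 hα hβ h,
    SRS.MPCriterion.exists_joinablePair⟩

/-- For a finite monadic convergent SRS `R` and irreducible
strings `α, β`: there exist distinct irreducible `X, Y` with `αX ↓_R αY` and
`βX ↓_R βY` iff there exist irreducible strings `X', Y', V` and strings
`γ₁ ∈ MP(α)`, `γ₂ ∈ MP(β)` with `X' ≠ Y'`, `X'V` and `Y'V` irreducible, and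
either (a) `αX'V →!_R γ₁`, `αY'V →!_R γ₁`, `βX' →!_R γ₂`, `βY' →!_R γ₂`, or
(b) `αX' →!_R γ₁`, `αY' →!_R γ₁`, `βX'V →!_R γ₂`, `βY'V →!_R γ₂`. -/
theorem monadic_one_mapping_CE_characterization {σ : Type*} [Fintype σ]
    (R : List (List σ × List σ)) (hmon : SRS.Monadic R) (hconv : SRS.Convergent R)
    (α β : List σ) (hα : SRS.Irreducible R α) (hβ : SRS.Irreducible R β) :
    (∃ X Y : List σ, X ≠ Y ∧ SRS.Irreducible R X ∧ SRS.Irreducible R Y ∧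
        SRS.Joins R (α ++ X) (α ++ Y) ∧ SRS.Joins R (β ++ X) (β ++ Y)) ↔
      ∃ X' Y' V γ₁ γ₂ : List σ,
        X' ≠ Y' ∧
        γ₁ ∈ SRS.MP R α ∧
        γ₂ ∈ SRS.MP R β ∧
        SRS.Irreducible R X' ∧ SRS.Irreducible R Y' ∧ SRS.Irreducible R V ∧
        SRS.Irreducible R (X' ++ V) ∧ SRS.Irreducible R (Y' ++ V) ∧
        ((SRS.NormalizesTo R (α ++ X' ++ V) γ₁ ∧
          SRS.NormalizesTo R (α ++ Y' ++ V) γ₁ ∧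
          SRS.NormalizesTo R (β ++ X') γ₂ ∧
          SRS.NormalizesTo R (β ++ Y') γ₂) ∨
         (SRS.NormalizesTo R (α ++ X') γ₁ ∧
          SRS.NormalizesTo R (α ++ Y') γ₁ ∧
          SRS.NormalizesTo R (β ++ X' ++ V) γ₂ ∧
          SRS.NormalizesTo R (β ++ Y' ++ V) γ₂)) :=
  monadic_one_mapping_CE_characterization_general R hmon hconv α β hα hβ
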